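/- arXiv:2502.00195 — 2 statements merged into one kernel-verified Lean document; each statement's English description precedes it below -/
import Mathlib

section
/- P satisfies NIS for the utility function u if and only if (i) P satisfies NIAS for u, and (ii) for all decision problems i, j ∈ D the revealed experiments satisfy G(Q_i^P | A_i, x_i) ≥ G(Q_j^P | A_i, x_i). -/
open Finset
open scoped Classical

noncomputable section

variable {Ω 𝒜 D X : Type*}

/-- `P` is state-dependent stochastic choice (SDSC) data for prior `μ` and action sets `A`
(extended by `0` outside `A i`). -/
def IsSDSC [Fintype Ω] (μ : Ω → ℝ) (A : D → Finset 𝒜) (P : D → 𝒜 → Ω → ℝ) : Prop :=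
  (∀ i a ω, 0 ≤ P i a ω) ∧ (∀ i a ω, P i a ω ≤ 1) ∧
    (∀ i a ω, a ∉ A i → P i a ω = 0) ∧ ∀ i ω, ∑ a ∈ A i, P i a ω = μ ω

/-- `μ` is a full-support prior probability on `Ω`. -/
def IsPrior [Fintype Ω] (μ : Ω → ℝ) : Prop := (∀ ω, 0 < μ ω) ∧ ∑ ω, μ ω = 1

/-- No Improving (Action or Attention) Switches. -/
def NIS [Fintype Ω] (u : X → ℝ) (A : D → Finset 𝒜) (hA : ∀ i, (A i).Nonempty)
    (x : D → 𝒜 → Ω → X) (P : D → 𝒜 → Ω → ℝ) : Prop :=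
  ∀ i j : D, ∑ a ∈ A i, ∑ ω, P i a ω * u (x i a ω) ≥
    ∑ a ∈ A j, (A i).sup' (hA i) fun a' => ∑ ω, P j a ω * u (x i a' ω)

/-- No Improving Action Switches. -/
def NIAS [Fintype Ω] (u : X → ℝ) (A : D → Finset 𝒜) (x : D → 𝒜 → Ω → X)
    (P : D → 𝒜 → Ω → ℝ) : Prop :=
  ∀ i : D, ∀ a ∈ A i, ∀ a' ∈ A i,
    ∑ ω, P i a ω * u (x i a ω) ≥ ∑ ω, P i a ω * u (x i a' ω)

/-- An information structure: a finitely supported probability distribution over posteriors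
on `Ω` that is Bayes-consistent with the prior `μ`. -/
structure InfoStruct (Ω : Type*) [Fintype Ω] (μ : Ω → ℝ) where
  Q : (Ω → ℝ) → ℝ
  finite_support : (Function.support Q).Finite
  nonneg : ∀ γ, 0 ≤ Q γ
  posterior_nonneg : ∀ γ ∈ Function.support Q, ∀ ω, 0 ≤ γ ω
  posterior_sum_one : ∀ γ ∈ Function.support Q, ∑ ω, γ ω = 1
  mass_one : ∑ γ ∈ finite_support.toFinset, Q γ = 1
  bayes : ∀ ω, ∑ γ ∈ finite_support.toFinset, Q γ * γ ω = μ ω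

/-- An action strategy for `Qs` on action set `A`. -/
def IsStrategy [Fintype Ω] {μ : Ω → ℝ} (Qs : InfoStruct Ω μ) (A : Finset 𝒜)
    (q : (Ω → ℝ) → 𝒜 → ℝ) : Prop :=
  ∀ γ ∈ Function.support Qs.Q,
    (∀ a, 0 ≤ q γ a) ∧ (∀ a ∉ A, q γ a = 0) ∧ ∑ a ∈ A, q γ a = 1

/-- The SDSC generated by the strategy `(Qs, q)`. -/
def genSDSC [Fintype Ω] {μ : Ω → ℝ} (Qs : InfoStruct Ω μ) (q : (Ω → ℝ) → 𝒜 → ℝ)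
    (a : 𝒜) (ω : Ω) : ℝ :=
  ∑ γ ∈ Qs.finite_support.toFinset, q γ a * Qs.Q γ * γ ω

/-- Posterior expected utility `U(a | γ, x)`. -/
def postEU [Fintype Ω] (u : X → ℝ) (x : 𝒜 → Ω → X) (a : 𝒜) (γ : Ω → ℝ) : ℝ :=
  ∑ ω, γ ω * u (x a ω)

/-- Gross expected utility `g(Q, q | x)`. -/
def gross [Fintype Ω] {μ : Ω → ℝ} (u : X → ℝ) (Qs : InfoStruct Ω μ) (A : Finset 𝒜)
    (q : (Ω → ℝ) → 𝒜 → ℝ) (x : 𝒜 → Ω → X) : ℝ :=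
  ∑ γ ∈ Qs.finite_support.toFinset, ∑ a ∈ A, Qs.Q γ * q γ a * postEU u x a γ

/-- Indirect expected utility `G(Q | A, x)`: the maximal gross expected utility over
action strategies for `Qs` on `A`. -/
def indirect [Fintype Ω] {μ : Ω → ℝ} (u : X → ℝ) (Qs : InfoStruct Ω μ)
    (A : Finset 𝒜) (x : 𝒜 → Ω → X) : ℝ :=
  sSup {r | ∃ q, IsStrategy Qs A q ∧ gross u Qs A q x = r}

/-- Marginal choice probability `P_i(a)`. -/
def margP [Fintype Ω] (P : D → 𝒜 → Ω → ℝ) (i : D) (a : 𝒜) : ℝ := ∑ ω, P i a ω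

/-- Revealed posterior `γ_i^a`. -/
def revPost [Fintype Ω] (P : D → 𝒜 → Ω → ℝ) (i : D) (a : 𝒜) : Ω → ℝ :=
  fun ω => P i a ω / margP P i a

/-- The revealed experiment `Q_i^P`, as a mass function on posteriors. -/
def revExpFun [Fintype Ω] (P : D → 𝒜 → Ω → ℝ) (A : D → Finset 𝒜) (i : D)
    (γ : Ω → ℝ) : ℝ :=
  ∑ a ∈ (A i).filter (fun a => 0 < margP P i a ∧ revPost P i a = γ), margP P i a

/-- The revealed action strategy `q_i^P`. -/
def revStrat [Fintype Ω] (P : D → 𝒜 → Ω → ℝ) (A : D → Finset 𝒜) (i : D)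
    (γ : Ω → ℝ) (a : 𝒜) : ℝ :=
  if 0 < margP P i a ∧ revPost P i a = γ then margP P i a / revExpFun P A i γ else 0

/-!
The indirect utility of an information structure is attained by best-responding at every
posterior, so `G(Q | A, x) = ∑_γ Q(γ) · max_a U(a | γ, x)`. For the revealed experiment `Q_j^P`
the posteriors are indexed by the actions chosen in problem `j`, and weighting `γ_j^a` by `P_j(a)`
turns this sum into `∑_{a ∈ A_j} max_{â ∈ A_i} ∑_ω P_j(a, ω) u(x_i(â, ω))`, the right-hand side
of NIS. NIS for `i = j` is exactly NIAS, and given NIAS the left-hand side of NIS is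
`G(Q_i^P | A_i, x_i)`.
-/

section IndirectUtility

variable [Fintype Ω] {μ : Ω → ℝ} (u : X → ℝ) (Qs : InfoStruct Ω μ) {A : Finset 𝒜}
  (hA : A.Nonempty) (x : 𝒜 → Ω → X)

lemma gross_le_sum_sup' {q : (Ω → ℝ) → 𝒜 → ℝ} (hq : IsStrategy Qs A q) :
    gross u Qs A q x ≤
      ∑ γ ∈ Qs.finite_support.toFinset, Qs.Q γ * A.sup' hA (postEU u x · γ) := by
  refine sum_le_sum fun γ hγ => ?_
  obtain ⟨hq_nonneg, -, hq_sum⟩ := hq γ (Qs.finite_support.mem_toFinset.mp hγ)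
  calc ∑ a ∈ A, Qs.Q γ * q γ a * postEU u x a γ
      ≤ ∑ a ∈ A, Qs.Q γ * q γ a * A.sup' hA (postEU u x · γ) :=
        sum_le_sum fun a ha => mul_le_mul_of_nonneg_left (le_sup' (postEU u x · γ) ha)
          (mul_nonneg (Qs.nonneg γ) (hq_nonneg a))
    _ = Qs.Q γ * A.sup' hA (postEU u x · γ) := by
        rw [← sum_mul, ← mul_sum, hq_sum, mul_one]

lemma exists_strategy_gross_eq_sum_sup' :
    ∃ q, IsStrategy Qs A q ∧ gross u Qs A q x =
      ∑ γ ∈ Qs.finite_support.toFinset, Qs.Q γ * A.sup' hA (postEU u x · γ) := by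
  choose best best_mem best_eq using fun γ : Ω → ℝ => exists_mem_eq_sup' hA (postEU u x · γ)
  refine ⟨fun γ a => if a = best γ then 1 else 0, fun γ _ => ⟨?_, ?_, ?_⟩, ?_⟩
  · intro a
    positivity
  · exact fun a ha => if_neg (ne_of_mem_of_not_mem (best_mem γ) ha).symm
  · simp [best_mem γ]
  · refine sum_congr rfl fun γ _ => ?_
    simp [best_mem γ, best_eq γ]

lemma indirect_eq_sum_sup' :
    indirect u Qs A x =
      ∑ γ ∈ Qs.finite_support.toFinset, Qs.Q γ * A.sup' hA (postEU u x · γ) :=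
  IsGreatest.csSup_eq ⟨exists_strategy_gross_eq_sum_sup' u Qs hA x,
    by rintro r ⟨q, hq, rfl⟩; exact gross_le_sum_sup' u Qs hA x hq⟩

end IndirectUtility

section RevealedExperiment

variable [Fintype Ω] {P : D → 𝒜 → Ω → ℝ} (hP : ∀ i a ω, 0 ≤ P i a ω)
include hP

lemma margP_nonneg (i : D) (a : 𝒜) : 0 ≤ margP P i a :=
  sum_nonneg fun ω _ => hP i a ω

-- Also for `P_i(a) = 0`, where the revealed posterior is the junk value `0`.
lemma margP_mul_revPost (i : D) (a : 𝒜) (ω : Ω) :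
    margP P i a * revPost P i a ω = P i a ω := by
  by_cases h : margP P i a = 0
  · rw [h, zero_mul, eq_comm]
    exact (sum_eq_zero_iff_of_nonneg fun ω _ => hP i a ω).mp h ω (mem_univ ω)
  · exact mul_div_cancel₀ _ h

lemma sum_revExpFun_mul {μ : Ω → ℝ} {A : D → Finset 𝒜} {j : D} {Qs : InfoStruct Ω μ}
    (hQ : Qs.Q = revExpFun P A j) (F : (Ω → ℝ) → ℝ) :
    ∑ γ ∈ Qs.finite_support.toFinset, Qs.Q γ * F γ =
      ∑ a ∈ A j, margP P j a * F (revPost P j a) := by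
  have hmaps : ∀ a ∈ (A j).filter (0 < margP P j ·),
      revPost P j a ∈ Qs.finite_support.toFinset := by
    intro a ha
    rw [Set.Finite.mem_toFinset, Function.mem_support, hQ]
    refine (lt_of_lt_of_le (mem_filter.mp ha).2 ?_).ne'
    exact single_le_sum (f := margP P j) (fun b _ => margP_nonneg hP j b)
      (mem_filter.mpr ⟨(mem_filter.mp ha).1, (mem_filter.mp ha).2, rfl⟩)
  rw [← sum_filter_of_ne (p := (0 < margP P j ·))
      (f := fun a => margP P j a * F (revPost P j a)) fun a _ h =>
      (margP_nonneg hP j a).lt_of_ne (left_ne_zero_of_mul h).symm,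
    ← sum_fiberwise_of_maps_to hmaps]
  refine sum_congr rfl fun γ _ => ?_
  rw [hQ, revExpFun, filter_filter, sum_mul]
  exact sum_congr rfl fun a ha => by rw [(mem_filter.mp ha).2.2]

end RevealedExperiment

section SwitchValues

variable [Fintype Ω] (u : X → ℝ) (A : D → Finset 𝒜) (hA : ∀ i, (A i).Nonempty)
  (x : D → 𝒜 → Ω → X) (P : D → 𝒜 → Ω → ℝ)

/-- The right-hand side of NIS: the expected utility in problem `i` of best-responding to each
action recommended by `P` in problem `j`. -/
def bestResponseValue (i j : D) : ℝ :=
  ∑ a ∈ A j, (A i).sup' (hA i) fun a' => ∑ ω, P j a ω * u (x i a' ω)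

def realizedValue (i : D) : ℝ :=
  ∑ a ∈ A i, ∑ ω, P i a ω * u (x i a ω)

lemma realizedValue_le_bestResponseValue (i : D) :
    realizedValue u A x P i ≤ bestResponseValue u A hA x P i i :=
  sum_le_sum fun a ha => le_sup' (fun a' => ∑ ω, P i a ω * u (x i a' ω)) ha

lemma nis_iff_forall_bestResponseValue_le :
    NIS u A hA x P ↔ ∀ i j, bestResponseValue u A hA x P i j ≤ realizedValue u A x P i :=
  Iff.rfl

lemma nias_iff_forall_bestResponseValue_le :
    NIAS u A x P ↔ ∀ i, bestResponseValue u A hA x P i i ≤ realizedValue u A x P i := by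
  refine forall_congr' fun i => ?_
  have hle : ∀ a ∈ A i, ∑ ω, P i a ω * u (x i a ω) ≤
      (A i).sup' (hA i) fun a' => ∑ ω, P i a ω * u (x i a' ω) :=
    fun a ha => le_sup' (fun a' => ∑ ω, P i a ω * u (x i a' ω)) ha
  rw [(realizedValue_le_bestResponseValue u A hA x P i).ge_iff_eq, realizedValue,
    bestResponseValue, sum_eq_sum_iff_of_le hle]
  refine forall₂_congr fun a ha => ?_
  rw [← (hle a ha).ge_iff_eq, sup'_le_iff]

lemma indirect_revealed_eq_bestResponseValue (hP : ∀ i a ω, 0 ≤ P i a ω) {μ : Ω → ℝ}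
    {Qs : InfoStruct Ω μ} {j : D} (hQ : Qs.Q = revExpFun P A j) (i : D) :
    indirect u Qs (A i) (x i) = bestResponseValue u A hA x P i j := by
  rw [indirect_eq_sum_sup' u Qs (hA i), sum_revExpFun_mul hP hQ]
  refine sum_congr rfl fun a _ => ?_
  rw [mul₀_sup' (margP_nonneg hP j a)]
  refine sup'_congr _ rfl fun a' _ => ?_
  simp only [postEU, mul_sum, ← mul_assoc, margP_mul_revPost hP]

end SwitchValues

theorem nis_iff_nias_and_revealed_optimal_general [Fintype Ω]
    (μ : Ω → ℝ) (u : X → ℝ) (A : D → Finset 𝒜) (hA : ∀ i, (A i).Nonempty)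
    (x : D → 𝒜 → Ω → X) (P : D → 𝒜 → Ω → ℝ)
    (hP : IsSDSC μ A P)
    (Qr : D → InfoStruct Ω μ) (hQr : ∀ i, (Qr i).Q = revExpFun P A i) :
    NIS u A hA x P ↔
      NIAS u A x P ∧
        ∀ i j : D, indirect u (Qr i) (A i) (x i) ≥ indirect u (Qr j) (A i) (x i) := by
  simp only [ge_iff_le, indirect_revealed_eq_bestResponseValue u A hA x P hP.1 (hQr _),
    nis_iff_forall_bestResponseValue_le u A hA x P, nias_iff_forall_bestResponseValue_le u A hA x P]
  constructor
  · intro hNIS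
    exact ⟨fun i => hNIS i i,
      fun i j => (hNIS i j).trans (realizedValue_le_bestResponseValue u A hA x P i)⟩
  · rintro ⟨hself, hoptimal⟩ i j
    exact (hoptimal i j).trans (hself i)

/-- `P` satisfies NIS for `u` iff (i) `P` satisfies NIAS for `u` and (ii) the revealed
experiments satisfy `G(Q_i^P | A_i, x_i) ≥ G(Q_j^P | A_i, x_i)` for all `i, j`. -/
theorem nis_iff_nias_and_revealed_optimal [Fintype Ω] [Fintype 𝒜] [Fintype D]
    (μ : Ω → ℝ) (u : X → ℝ) (A : D → Finset 𝒜) (hA : ∀ i, (A i).Nonempty)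
    (x : D → 𝒜 → Ω → X) (P : D → 𝒜 → Ω → ℝ)
    (hμ : IsPrior μ) (hP : IsSDSC μ A P)
    (Qr : D → InfoStruct Ω μ) (hQr : ∀ i, (Qr i).Q = revExpFun P A i) :
    NIS u A hA x P ↔
      NIAS u A x P ∧
        ∀ i j : D, indirect u (Qr i) (A i) (x i) ≥ indirect u (Qr j) (A i) (x i) :=
  nis_iff_nias_and_revealed_optimal_general μ u A hA x P hP Qr hQr
end
end

section
/- The revealed experiment is weakly dominated in value by any generating structure: let i ∈ D and let Q be an information structure with an action strategy q on A_i such that P_{(Q,q)} = P_i. Then for every nonempty action set A ⊆ 𝒜 and every prize specification x : 𝒜 × Ω → X, G(Q | A, x) ≥ G(Q_i^P | A, x). -/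
/-! The revealed experiment is a garbling of any generating structure `(Q, q)`: drawing an
action `a ∼ q(· | γ)` at posterior `γ` and reporting the revealed posterior `γ_i^a` reproduces
`Q_i^P`. So a strategy `q'` for `Q_i^P` is replicated on `Q` by `γ ↦ ∑ₐ q(a | γ) q'(· | γ_i^a)`;
both generate the same state-dependent choice data, hence the same gross utility. -/

open Finset
open scoped Classical

noncomputable section

variable {Ω 𝒜 D X : Type*}

def IsDistOn (p : 𝒜 → ℝ) (A : Finset 𝒜) : Prop :=
  (∀ a, 0 ≤ p a) ∧ (∀ a ∉ A, p a = 0) ∧ ∑ a ∈ A, p a = 1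

theorem IsDistOn.le_one {p : 𝒜 → ℝ} {A : Finset 𝒜} (hp : IsDistOn p A) {a : 𝒜} (ha : a ∈ A) :
    p a ≤ 1 :=
  hp.2.2 ▸ single_le_sum (fun b _ => hp.1 b) ha

theorem IsDistOn.sum_mul {p : 𝒜 → ℝ} {B A : Finset 𝒜} {r : 𝒜 → 𝒜 → ℝ} (hp : IsDistOn p B)
    (hr : ∀ a ∈ B, 0 < p a → IsDistOn (r a) A) :
    IsDistOn (fun b => ∑ a ∈ B, p a * r a b) A := by
  refine ⟨fun b => sum_nonneg fun a ha => ?_, fun b hb => sum_eq_zero fun a ha => ?_, ?_⟩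
  · rcases (hp.1 a).eq_or_lt with h | h
    · simp [← h]
    · exact mul_nonneg h.le ((hr a ha h).1 b)
  · rcases (hp.1 a).eq_or_lt with h | h
    · simp [← h]
    · rw [(hr a ha h).2.1 b hb, mul_zero]
  · rw [sum_comm, ← hp.2.2]
    refine sum_congr rfl fun a ha => ?_
    rcases (hp.1 a).eq_or_lt with h | h
    · simp [← h]
    · rw [← mul_sum, (hr a ha h).2.2, mul_one]

section InfoStruct

variable [Fintype Ω] {μ : Ω → ℝ} (Qs : InfoStruct Ω μ)

theorem InfoStruct.mem_support_toFinset {γ : Ω → ℝ} :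
    γ ∈ Qs.finite_support.toFinset ↔ γ ∈ Function.support Qs.Q :=
  Set.Finite.mem_toFinset _

theorem exists_isStrategy {A : Finset 𝒜} (hA : A.Nonempty) : ∃ q, IsStrategy Qs A q := by
  obtain ⟨a₀, ha₀⟩ := hA
  refine ⟨fun _ a => if a = a₀ then 1 else 0, fun _ _ => ⟨fun a => ?_, fun a ha => ?_, ?_⟩⟩
  · dsimp only
    split_ifs <;> norm_num
  · exact if_neg (ne_of_mem_of_not_mem ha₀ ha).symm
  · rw [sum_ite_eq' A a₀, if_pos ha₀]

theorem IsStrategy.garble {B A : Finset 𝒜} {q : (Ω → ℝ) → 𝒜 → ℝ} {r : 𝒜 → 𝒜 → ℝ}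
    (hq : IsStrategy Qs B q)
    (hr : ∀ γ ∈ Function.support Qs.Q, ∀ a ∈ B, 0 < q γ a → IsDistOn (r a) A) :
    IsStrategy Qs A (fun γ b => ∑ a ∈ B, q γ a * r a b) :=
  fun γ hγ => IsDistOn.sum_mul (hq γ hγ) (hr γ hγ)

theorem genSDSC_nonneg {B : Finset 𝒜} {q : (Ω → ℝ) → 𝒜 → ℝ} (hq : IsStrategy Qs B q)
    (a : 𝒜) (ω : Ω) : 0 ≤ genSDSC Qs q a ω := by
  refine sum_nonneg fun γ hγ => ?_
  rw [Qs.mem_support_toFinset] at hγ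
  exact mul_nonneg (mul_nonneg ((hq γ hγ).1 a) (Qs.nonneg γ)) (Qs.posterior_nonneg γ hγ ω)

theorem sum_genSDSC (q : (Ω → ℝ) → 𝒜 → ℝ) (a : 𝒜) :
    ∑ ω, genSDSC Qs q a ω = ∑ γ ∈ Qs.finite_support.toFinset, q γ a * Qs.Q γ := by
  simp only [genSDSC]
  rw [sum_comm]
  refine sum_congr rfl fun γ hγ => ?_
  rw [← mul_sum, Qs.posterior_sum_one γ (Qs.mem_support_toFinset.1 hγ), mul_one]

theorem sum_genSDSC_pos {B : Finset 𝒜} {q : (Ω → ℝ) → 𝒜 → ℝ} (hq : IsStrategy Qs B q)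
    {γ : Ω → ℝ} (hγ : γ ∈ Function.support Qs.Q) {a : 𝒜} (ha : 0 < q γ a) :
    0 < ∑ ω, genSDSC Qs q a ω := by
  rw [sum_genSDSC]
  refine (mul_pos ha ((Qs.nonneg γ).lt_of_ne' hγ)).trans_le <|
    single_le_sum (f := fun γ' => q γ' a * Qs.Q γ') (fun γ' hγ' => ?_)
      (Qs.mem_support_toFinset.2 hγ)
  exact mul_nonneg ((hq γ' (Qs.mem_support_toFinset.1 hγ')).1 a) (Qs.nonneg γ')

theorem genSDSC_garble {B : Finset 𝒜} (q : (Ω → ℝ) → 𝒜 → ℝ) (r : 𝒜 → 𝒜 → ℝ) (b : 𝒜) (ω : Ω) :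
    genSDSC Qs (fun γ b => ∑ a ∈ B, q γ a * r a b) b ω = ∑ a ∈ B, r a b * genSDSC Qs q a ω := by
  simp only [genSDSC, sum_mul, mul_sum]
  rw [sum_comm]
  exact sum_congr rfl fun _ _ => sum_congr rfl fun _ _ => by ring

theorem gross_eq_sum_genSDSC (u : X → ℝ) (A : Finset 𝒜) (q : (Ω → ℝ) → 𝒜 → ℝ)
    (x : 𝒜 → Ω → X) :
    gross u Qs A q x = ∑ a ∈ A, ∑ ω, genSDSC Qs q a ω * u (x a ω) := by
  simp only [gross, genSDSC, postEU, sum_mul, mul_sum]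
  rw [sum_comm]
  refine sum_congr rfl fun a _ => ?_
  rw [sum_comm]
  exact sum_congr rfl fun _ _ => sum_congr rfl fun _ _ => by ring

theorem gross_le_sum_abs (u : X → ℝ) {A : Finset 𝒜} {q : (Ω → ℝ) → 𝒜 → ℝ}
    (hq : IsStrategy Qs A q) (x : 𝒜 → Ω → X) :
    gross u Qs A q x ≤ ∑ γ ∈ Qs.finite_support.toFinset, ∑ a ∈ A, Qs.Q γ * |postEU u x a γ| := by
  refine sum_le_sum fun γ hγ => sum_le_sum fun a ha => ?_
  have hdist : IsDistOn (q γ) A := hq γ (Qs.mem_support_toFinset.1 hγ)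
  rw [mul_assoc]
  refine mul_le_mul_of_nonneg_left ?_ (Qs.nonneg γ)
  calc q γ a * postEU u x a γ ≤ q γ a * |postEU u x a γ| :=
        mul_le_mul_of_nonneg_left (le_abs_self _) (hdist.1 a)
    _ ≤ |postEU u x a γ| := mul_le_of_le_one_left (abs_nonneg _) (hdist.le_one ha)

theorem bddAbove_gross (u : X → ℝ) (A : Finset 𝒜) (x : 𝒜 → Ω → X) :
    BddAbove {r | ∃ q, IsStrategy Qs A q ∧ gross u Qs A q x = r} :=
  ⟨_, by rintro _ ⟨q, hq, rfl⟩; exact gross_le_sum_abs Qs u hq x⟩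

theorem indirect_le_indirect {ν : Ω → ℝ} {Q' : InfoStruct Ω ν} (u : X → ℝ) {A : Finset 𝒜}
    (hA : A.Nonempty) (x : 𝒜 → Ω → X)
    (h : ∀ q', IsStrategy Q' A q' → ∃ q, IsStrategy Qs A q ∧ gross u Q' A q' x ≤ gross u Qs A q x) :
    indirect u Q' A x ≤ indirect u Qs A x := by
  obtain ⟨q₀, hq₀⟩ := exists_isStrategy Q' hA
  refine csSup_le ⟨_, q₀, hq₀, rfl⟩ ?_
  rintro _ ⟨q', hq', rfl⟩
  obtain ⟨q, hq, hle⟩ := h q' hq'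
  exact hle.trans (le_csSup (bddAbove_gross Qs u A x) ⟨q, hq, rfl⟩)

end InfoStruct

section Revealed

variable [Fintype Ω] {P : D → 𝒜 → Ω → ℝ} {A : D → Finset 𝒜} {i : D}

theorem mul_revPost {a : 𝒜} (hP : ∀ ω, 0 ≤ P i a ω) (ω : Ω) :
    margP P i a * revPost P i a ω = P i a ω := by
  by_cases h : margP P i a = 0
  · rw [h, zero_mul, eq_comm]
    exact (sum_eq_zero_iff_of_nonneg fun ω _ => hP ω).1 h ω (mem_univ ω)
  · exact mul_div_cancel₀ _ h

theorem margP_le_revExpFun {a : 𝒜} (ha : a ∈ A i) (hpos : 0 < margP P i a) :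
    margP P i a ≤ revExpFun P A i (revPost P i a) :=
  single_le_sum (f := margP P i) (fun _ hb => (mem_filter.1 hb).2.1.le)
    (mem_filter.2 ⟨ha, hpos, rfl⟩)

theorem sum_revExpFun_mul_s15 {S : Finset (Ω → ℝ)}
    (hS : ∀ a ∈ A i, 0 < margP P i a → revPost P i a ∈ S) (f : (Ω → ℝ) → ℝ) :
    ∑ γ ∈ S, revExpFun P A i γ * f γ =
      ∑ a ∈ (A i).filter (0 < margP P i ·), margP P i a * f (revPost P i a) := by
  rw [← sum_fiberwise_of_maps_to (g := revPost P i)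
    (fun a ha => hS a (mem_filter.1 ha).1 (mem_filter.1 ha).2)]
  refine sum_congr rfl fun γ _ => ?_
  rw [revExpFun, filter_filter, sum_mul]
  exact sum_congr rfl fun a ha => by rw [(mem_filter.1 ha).2.2]

theorem revPost_mem_support {ν : Ω → ℝ} {Qr : InfoStruct Ω ν} (hQr : Qr.Q = revExpFun P A i)
    {a : 𝒜} (ha : a ∈ A i) (hpos : 0 < margP P i a) : revPost P i a ∈ Function.support Qr.Q := by
  rw [Function.mem_support, hQr]
  exact (hpos.trans_le (margP_le_revExpFun ha hpos)).ne'

theorem genSDSC_of_revExpFun {ν : Ω → ℝ} {Qr : InfoStruct Ω ν} (hQr : Qr.Q = revExpFun P A i)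
    (hP : ∀ a ∈ A i, ∀ ω, 0 ≤ P i a ω) (q : (Ω → ℝ) → 𝒜 → ℝ) (b : 𝒜) (ω : Ω) :
    genSDSC Qr q b ω = ∑ a ∈ A i, q (revPost P i a) b * P i a ω := by
  have hS : ∀ a ∈ A i, 0 < margP P i a → revPost P i a ∈ Qr.finite_support.toFinset :=
    fun a ha hpos => Qr.mem_support_toFinset.2 (revPost_mem_support hQr ha hpos)
  calc genSDSC Qr q b ω
      = ∑ γ ∈ Qr.finite_support.toFinset, revExpFun P A i γ * (q γ b * γ ω) := by
        rw [genSDSC, ← hQr]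
        exact sum_congr rfl fun _ _ => by ring
    _ = ∑ a ∈ (A i).filter (0 < margP P i ·), q (revPost P i a) b * P i a ω := by
        rw [sum_revExpFun_mul_s15 hS]
        refine sum_congr rfl fun a ha => ?_
        rw [mul_left_comm, mul_revPost (hP a (mem_filter.1 ha).1)]
    _ = ∑ a ∈ A i, q (revPost P i a) b * P i a ω := by
        refine sum_filter_of_ne fun a ha hne => ?_
        refine (sum_nonneg fun ω _ => hP a ha ω).lt_of_ne' fun h => hne ?_
        rw [← mul_revPost (hP a ha), margP, h, zero_mul, mul_zero]

end Revealed

theorem revealed_dominated_general [Fintype Ω]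
    (μ : Ω → ℝ) (u : X → ℝ) (A : D → Finset 𝒜)
    (P : D → 𝒜 → Ω → ℝ)
    (i : D) (Qs : InfoStruct Ω μ) (q : (Ω → ℝ) → 𝒜 → ℝ)
    (hq : IsStrategy Qs (A i) q)
    (hgen : ∀ a ∈ A i, ∀ ω, genSDSC Qs q a ω = P i a ω)
    (Qri : InfoStruct Ω μ) (hQri : Qri.Q = revExpFun P A i)
    (A' : Finset 𝒜) (hA' : A'.Nonempty) (x' : 𝒜 → Ω → X) :
    indirect u Qs A' x' ≥ indirect u Qri A' x' := by
  have hP : ∀ a ∈ A i, ∀ ω, 0 ≤ P i a ω := fun a ha ω => hgen a ha ω ▸ genSDSC_nonneg Qs hq a ω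
  refine indirect_le_indirect Qs u hA' x' fun q' hq' =>
    ⟨_, hq.garble Qs (r := (q' <| revPost P i ·)) fun γ hγ a ha hqa => ?_, ?_⟩
  · have hpos : 0 < margP P i a := by
      rw [margP, ← sum_congr rfl fun ω _ => hgen a ha ω]
      exact sum_genSDSC_pos Qs hq hγ hqa
    exact hq' _ (revPost_mem_support hQri ha hpos)
  · refine le_of_eq ?_
    simp only [gross_eq_sum_genSDSC, genSDSC_garble, genSDSC_of_revExpFun hQri hP]
    refine sum_congr rfl fun b _ => sum_congr rfl fun ω _ => ?_
    congr 1
    exact sum_congr rfl fun a ha => by rw [hgen a ha ω]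

/-- The revealed experiment is weakly dominated in value by any generating structure:
if `(Qs, q)` generates the data `P_i`, then for every nonempty action set `A'` and
prize specification `x'`, `G(Qs | A', x') ≥ G(Q_i^P | A', x')`. -/
theorem revealed_dominated [Fintype Ω] [Fintype 𝒜] [Fintype D]
    (μ : Ω → ℝ) (u : X → ℝ) (A : D → Finset 𝒜) (hA : ∀ i, (A i).Nonempty)
    (x : D → 𝒜 → Ω → X) (P : D → 𝒜 → Ω → ℝ)
    (hμ : IsPrior μ) (hP : IsSDSC μ A P)
    (i : D) (Qs : InfoStruct Ω μ) (q : (Ω → ℝ) → 𝒜 → ℝ)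
    (hq : IsStrategy Qs (A i) q)
    (hgen : ∀ a ∈ A i, ∀ ω, genSDSC Qs q a ω = P i a ω)
    (Qri : InfoStruct Ω μ) (hQri : Qri.Q = revExpFun P A i)
    (A' : Finset 𝒜) (hA' : A'.Nonempty) (x' : 𝒜 → Ω → X) :
    indirect u Qs A' x' ≥ indirect u Qri A' x' :=
  revealed_dominated_general μ u A P i Qs q hq hgen Qri hQri A' hA' x'
end
end
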